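/- Let $p$ be an odd prime and let $G \le \mathrm{GL}_2(\mathbb{F}_p)$ be a subgroup containing an element $c$ with $c^2 = I$, $\det(c) = -1$, and $\mathrm{tr}(c) = 0$. If the natural action of $G$ on $\mathbb{F}_p^2$ is irreducible, then it is absolutely irreducible, i.e., the action of $G$ on $\overline{\mathbb{F}_p}^2$ obtained by extension of scalars is irreducible. -/

import Mathlib

/-!
Suppose `W` is a `G`-stable line in `K²`, `K` the algebraic closure of `𝔽_p`. It is stable under
`c`, so it is an eigenline of `c` with eigenvalue `μ = ±1 ∈ 𝔽_p`. Since `tr c = 0` and `p` is odd,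
`c ≠ ±1`, so the `μ`-eigenspace of `c` over `K` is a proper subspace, hence equal to `W`, and
it contains the image of an eigenvector `v ∈ 𝔽_p²` (any nonzero vector in the image of `c + μ`,
which is killed by `c - μ` because `c² = 1`). A matrix over `𝔽_p` fixing the line `K v` scales `v` by a scalar
that lies in `𝔽_p`, so `𝔽_p v` is `G`-stable, contradicting irreducibility over `𝔽_p`.
-/

open Matrix Module

theorem Submodule.eq_span_singleton_of_finrank_eq_two {K V : Type*} [Field K] [AddCommGroup V]
    [Module K V] (hV : finrank K V = 2) {U : Submodule K V} (hU : U ≠ ⊤) {u : V} (hu : u ∈ U)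
    (hu0 : u ≠ 0) : U = K ∙ u := by
  have : FiniteDimensional K V := Module.finite_of_finrank_eq_succ hV
  refine (eq_of_le_of_finrank_le ((span_singleton_le_iff_mem u U).mpr hu) ?_).symm
  have := Submodule.finrank_lt hU
  rw [finrank_span_singleton hu0]
  omega

namespace Matrix

theorem ne_smul_one_of_trace_eq_zero {R : Type*} [CommRing R] [NoZeroDivisors R]
    {c : Matrix (Fin 2) (Fin 2) R} (htr : c.trace = 0) (h2 : (2 : R) ≠ 0) {μ : R} (hμ : μ ≠ 0) :
    c ≠ μ • 1 := by
  rintro rfl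
  rw [trace_smul, trace_one, Fintype.card_fin, smul_eq_mul, Nat.cast_ofNat] at htr
  exact mul_ne_zero hμ h2 htr

theorem eigenspace_toLin'_ne_top_of_trace_eq_zero {K : Type*} [Field K]
    {c : Matrix (Fin 2) (Fin 2) K} (htr : c.trace = 0) (h2 : (2 : K) ≠ 0) {μ : K} (hμ : μ ≠ 0) :
    Module.End.eigenspace (toLin' c) μ ≠ ⊤ := by
  intro h
  refine ne_smul_one_of_trace_eq_zero htr h2 hμ (toLin'.injective (LinearMap.ext fun x => ?_))
  have hx : x ∈ Module.End.eigenspace (toLin' c) μ := h ▸ Submodule.mem_top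
  simpa using Module.End.mem_eigenspace_iff.mp hx

theorem mul_self_eq_one_of_mulVec_eq_smul {K n : Type*} [Field K] [Fintype n] [DecidableEq n]
    {A : Matrix n n K} (hA : A * A = 1) {w : n → K} {μ : K} (hw : A *ᵥ w = μ • w)
    (hw0 : w ≠ 0) : μ * μ = 1 := by
  refine smul_left_injective K hw0 ?_
  change (μ * μ) • w = (1 : K) • w
  rw [mul_smul, ← hw, ← mulVec_smul, ← hw, mulVec_mulVec, hA, one_mulVec, one_smul]

theorem exists_mulVec_eq_smul_of_mul_self_eq_one {R n : Type*} [CommRing R] [Fintype n]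
    [DecidableEq n] {c : Matrix n n R} (hc : c * c = 1) {μ : R} (hμ : μ * μ = 1)
    (hne : c ≠ -μ • 1) : ∃ v : n → R, v ≠ 0 ∧ c *ᵥ v = μ • v := by
  have hA : c + μ • 1 ≠ 0 := fun h => hne (by rw [neg_smul, ← sub_eq_zero, sub_neg_eq_add, h])
  set A := c + μ • 1
  obtain ⟨x, hx⟩ : ∃ x, A *ᵥ x ≠ 0 := by
    by_contra! h
    exact hA (toLin'.injective (LinearMap.ext fun x => by simp [h]))
  have hcA : c * A = μ • A := by
    rw [mul_add, hc, mul_smul_comm, mul_one, smul_add, smul_smul, hμ, one_smul, add_comm]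
  exact ⟨A *ᵥ x, hx, by rw [mulVec_mulVec, hcA, smul_mulVec]⟩

theorem mulVec_mem_of_mem_span_singleton {R n : Type*} [CommSemiring R] [Fintype n]
    {g : Matrix n n R} {v : n → R} (hv : g *ᵥ v ∈ R ∙ v) {u : n → R} (hu : u ∈ R ∙ v) :
    g *ᵥ u ∈ R ∙ v := by
  obtain ⟨s, rfl⟩ := Submodule.mem_span_singleton.mp hu
  rw [mulVec_smul]
  exact Submodule.smul_mem _ s hv

variable {F K n : Type*} [Field F] [Field K] [Algebra F K] [Fintype n]

theorem mulVec_mem_span_of_map_mulVec_mem_span {g : Matrix n n F} {v : n → F} (hv : v ≠ 0)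
    (h : g.map (algebraMap F K) *ᵥ (algebraMap F K ∘ v) ∈ K ∙ (algebraMap F K ∘ v)) :
    g *ᵥ v ∈ F ∙ v := by
  obtain ⟨s, hs⟩ := Submodule.mem_span_singleton.mp h
  obtain ⟨j, hj⟩ := Function.ne_iff.mp hv
  have hcoord : ∀ i, s * algebraMap F K (v i) = algebraMap F K ((g *ᵥ v) i) := fun i => by
    rw [RingHom.map_mulVec, ← hs]; rfl
  have hs' : s = algebraMap F K ((g *ᵥ v) j / v j) := by
    rw [map_div₀, ← hcoord j, mul_div_cancel_right₀ _ ((map_ne_zero _).mpr hj)]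
  refine Submodule.mem_span_singleton.mpr ⟨(g *ᵥ v) j / v j, funext fun i => ?_⟩
  apply (algebraMap F K).injective
  rw [← hcoord i, hs', Pi.smul_apply, smul_eq_mul, map_mul]

theorem exists_eq_span_algebraMap_comp_of_mul_self_eq_one {c : Matrix (Fin 2) (Fin 2) F}
    (hc : c * c = 1) (htr : c.trace = 0) (h2 : (2 : F) ≠ 0) {W : Submodule K (Fin 2 → K)}
    (hbot : W ≠ ⊥) (htop : W ≠ ⊤) (hcW : ∀ w ∈ W, c.map (algebraMap F K) *ᵥ w ∈ W) :
    ∃ v : Fin 2 → F, v ≠ 0 ∧ W = K ∙ (algebraMap F K ∘ v) := by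
  set f := algebraMap F K
  have hfin : finrank K (Fin 2 → K) = 2 := finrank_fin_fun K
  obtain ⟨w, hwW, hw0⟩ := Submodule.exists_mem_ne_zero_of_ne_bot hbot
  have hWw := Submodule.eq_span_singleton_of_finrank_eq_two hfin htop hwW hw0
  obtain ⟨μ', hμ'⟩ := Submodule.mem_span_singleton.mp (hWw ▸ hcW w hwW)
  have hcc : c.map f * c.map f = 1 := by
    rw [← Matrix.map_mul, hc, Matrix.map_one _ f.map_zero f.map_one]
  obtain ⟨μ, hμ, rfl⟩ : ∃ μ : F, μ * μ = 1 ∧ f μ = μ' := by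
    rcases mul_self_eq_one_iff.mp (mul_self_eq_one_of_mulVec_eq_smul hcc hμ'.symm hw0) with h | h
    exacts [⟨1, one_mul 1, by simp [h]⟩, ⟨-1, by simp, by simp [h]⟩]
  have hμ0 : μ ≠ 0 := left_ne_zero_of_mul_eq_one hμ
  obtain ⟨v, hv0, hcv⟩ := exists_mulVec_eq_smul_of_mul_self_eq_one hc hμ
    (ne_smul_one_of_trace_eq_zero htr h2 (neg_ne_zero.mpr hμ0))
  have hE : Module.End.eigenspace (toLin' (c.map f)) (f μ) ≠ ⊤ :=
    eigenspace_toLin'_ne_top_of_trace_eq_zero (by rw [← AddMonoidHom.map_trace, htr, map_zero])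
      (by rw [← map_ofNat f 2]; exact (map_ne_zero f).mpr h2) ((map_ne_zero f).mpr hμ0)
  have hEW := (Submodule.eq_span_singleton_of_finrank_eq_two hfin hE
    (Module.End.mem_eigenspace_iff.mpr hμ'.symm) hw0).trans hWw.symm
  refine ⟨v, hv0, Submodule.eq_span_singleton_of_finrank_eq_two hfin htop (hEW ▸ ?_) ?_⟩
  · rw [Module.End.mem_eigenspace_iff, toLin'_apply]
    funext i
    rw [← RingHom.map_mulVec, hcv]
    simp
  · exact fun h => hv0 (funext fun i => f.injective (by simpa using congrFun h i))

end Matrix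

theorem stmt_16_general (p : ℕ) [Fact p.Prime] (hp : Odd p)
    (G : Subgroup (GL (Fin 2) (ZMod p)))
    (c : GL (Fin 2) (ZMod p)) (hcG : c ∈ G) (hc2 : c ^ 2 = 1)
    (htr : Matrix.trace (c : Matrix (Fin 2) (Fin 2) (ZMod p)) = 0)
    (hirr : ∀ W : Submodule (ZMod p) (Fin 2 → ZMod p),
      (∀ g ∈ G, ∀ v ∈ W, (g : Matrix (Fin 2) (Fin 2) (ZMod p)).mulVec v ∈ W) →
      W = ⊥ ∨ W = ⊤) :
    ∀ W : Submodule (AlgebraicClosure (ZMod p)) (Fin 2 → AlgebraicClosure (ZMod p)),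
      (∀ g ∈ G, ∀ v ∈ W,
        ((g : Matrix (Fin 2) (Fin 2) (ZMod p)).map
          (algebraMap (ZMod p) (AlgebraicClosure (ZMod p)))).mulVec v ∈ W) →
      W = ⊥ ∨ W = ⊤ := by
  intro W hW
  by_contra hW'
  obtain ⟨hbot, htop⟩ := not_or.mp hW'
  have h2 : (2 : ZMod p) ≠ 0 := Ring.two_ne_zero <| by
    rw [ZMod.ringChar_zmod_n]; rintro rfl; exact absurd hp (by decide)
  have hcc : (c * c : Matrix (Fin 2) (Fin 2) (ZMod p)) = 1 := by
    rw [← Units.val_mul, ← sq, hc2, Units.val_one]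
  obtain ⟨v, hv0, rfl⟩ :=
    exists_eq_span_algebraMap_comp_of_mul_self_eq_one hcc htr h2 hbot htop (hW c hcG)
  have hL : ∀ g ∈ G, ∀ u ∈ (ZMod p) ∙ v,
      (g : Matrix (Fin 2) (Fin 2) (ZMod p)) *ᵥ u ∈ (ZMod p) ∙ v := fun g hg u =>
    mulVec_mem_of_mem_span_singleton <| mulVec_mem_span_of_map_mulVec_mem_span hv0 <|
      hW g hg _ (Submodule.mem_span_singleton_self _)
  rcases hirr _ hL with h | h
  · exact hv0 (Submodule.span_singleton_eq_bot.mp h)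
  · have h1 := finrank_span_singleton (K := ZMod p) hv0
    rw [h, finrank_top, finrank_fin_fun] at h1
    omega

theorem stmt_16 (p : ℕ) [Fact p.Prime] (hp : Odd p)
    (G : Subgroup (GL (Fin 2) (ZMod p)))
    (c : GL (Fin 2) (ZMod p)) (hcG : c ∈ G) (hc2 : c ^ 2 = 1)
    (hdet : Matrix.GeneralLinearGroup.det c = -1)
    (htr : Matrix.trace (c : Matrix (Fin 2) (Fin 2) (ZMod p)) = 0)
    (hirr : ∀ W : Submodule (ZMod p) (Fin 2 → ZMod p),
      (∀ g ∈ G, ∀ v ∈ W, (g : Matrix (Fin 2) (Fin 2) (ZMod p)).mulVec v ∈ W) →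
      W = ⊥ ∨ W = ⊤) :
    ∀ W : Submodule (AlgebraicClosure (ZMod p)) (Fin 2 → AlgebraicClosure (ZMod p)),
      (∀ g ∈ G, ∀ v ∈ W,
        ((g : Matrix (Fin 2) (Fin 2) (ZMod p)).map
          (algebraMap (ZMod p) (AlgebraicClosure (ZMod p)))).mulVec v ∈ W) →
      W = ⊥ ∨ W = ⊤ :=
  stmt_16_general p hp G c hcG hc2 htr hirr
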